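/- arXiv:1208.6357 — 6 statements merged into one kernel-verified Lean document; each statement's English description precedes it below -/
import Mathlib

section
/- Let f(θ,α,β) = log(1 + θ/(1+4α) + (1-θ)/(1+4β) + θ(1-θ)/((1+4α)(1+4β))) on the set X = {(θ,α,β) : α+β = 1, 0 ≤ α, β, 0 ≤ θ ≤ 1}. Then the maximum of f over X equals log 2, and it is attained exactly at the two points (θ,α,β) = (0,1,0) and (θ,α,β) = (1,0,1). -/
noncomputable def fObj (θ α β : ℝ) : ℝ :=
  Real.log (1 + θ / (1 + 4*α) + (1 - θ) / (1 + 4*β)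
    + θ * (1 - θ) / ((1 + 4*α) * (1 + 4*β)))

theorem stmt_0 (θ α β : ℝ) (hαβ : α + β = 1) (hα : 0 ≤ α) (hβ : 0 ≤ β)
    (hθ0 : 0 ≤ θ) (hθ1 : θ ≤ 1) :
    fObj θ α β ≤ Real.log 2 ∧
      (fObj θ α β = Real.log 2 ↔
        (θ = 0 ∧ α = 1 ∧ β = 0) ∨ (θ = 1 ∧ α = 0 ∧ β = 1)) := by
  have hA : (0:ℝ) < 1 + 4*α := by linarith
  have hB : (0:ℝ) < 1 + 4*β := by linarith
  set A := 1 + 4*α with hAdef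
  set B := 1 + 4*β with hBdef
  have hAB : 0 < A * B := mul_pos hA hB
  have hE : fObj θ α β =
      Real.log ((A*B + θ*B + (1-θ)*A + θ*(1-θ)) / (A*B)) := by
    unfold fObj
    rw [← hAdef, ← hBdef]
    congr 1
    field_simp
  set N := A*B + θ*B + (1-θ)*A + θ*(1-θ) with hN
  have t1 : 0 ≤ α * β := mul_nonneg hα hβ
  have t2 : 0 ≤ β * ((1-θ) * (4-θ)) :=
    mul_nonneg hβ (mul_nonneg (by linarith) (by linarith))
  have t3 : 0 ≤ α * (θ * (3+θ)) :=
    mul_nonneg hα (mul_nonneg hθ0 (by linarith))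
  have hgap : 2 * (A*B) - N = 16*(α*β) + β*((1-θ)*(4-θ)) + α*(θ*(3+θ)) := by
    have hb : β = 1 - α := by linarith
    simp only [hN, hAdef, hBdef, hb]; ring
  have key : N ≤ 2 * (A*B) := by nlinarith
  have hNpos : 0 < N := by nlinarith
  have hratpos : 0 < N / (A*B) := div_pos hNpos hAB
  have hratle : N / (A*B) ≤ 2 := (div_le_iff₀ hAB).mpr (by linarith)
  constructor
  · rw [hE]
    exact Real.log_le_log hratpos hratle
  · constructor
    · intro h
      rw [hE] at h
      have h2 : N / (A*B) = 2 :=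
        Real.log_injOn_pos (Set.mem_Ioi.mpr hratpos) (Set.mem_Ioi.mpr two_pos) h
      have hNeq : N = 2 * (A*B) := by
        field_simp at h2; linarith
      have hzero : 16*(α*β) + β*((1-θ)*(4-θ)) + α*(θ*(3+θ)) = 0 := by linarith
      have h1 : α * β = 0 := by nlinarith
      rcases mul_eq_zero.mp h1 with ha0 | hb0
      · right
        have hb1 : β = 1 := by linarith
        have : (1-θ) * (4-θ) = 0 := by
          rw [ha0, hb1] at hzero; linarith
        rcases mul_eq_zero.mp this with h' | h'
        · exact ⟨by linarith, ha0, hb1⟩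
        · linarith
      · left
        have ha1 : α = 1 := by linarith
        have : θ * (3+θ) = 0 := by
          rw [hb0, ha1] at hzero; linarith
        rcases mul_eq_zero.mp this with h' | h'
        · exact ⟨h', ha1, hb0⟩
        · linarith
    · rintro (⟨rfl, rfl, rfl⟩ | ⟨rfl, rfl, rfl⟩) <;> (unfold fObj; norm_num)
end

section
/- For a positive definite Hermitian matrix A, the function W ↦ log det(W) - Tr(W·A) is strictly concave on the cone of positive definite Hermitian matrices, and its unique stationary point is W = A⁻¹. -/
open Matrix ComplexOrder

variable {n : ℕ}

lemma stmt5_posDef_conj {B C : Matrix (Fin n) (Fin n) ℂ} (hB : B.PosDef)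
    (hC : C.det ≠ 0) : (Cᴴ * B * C).PosDef := by
  refine PosDef.of_dotProduct_mulVec_pos (isHermitian_conjTranspose_mul_mul C hB.isHermitian) (fun x hx => ?_)
  have hCx : C *ᵥ x ≠ 0 := by
    intro h
    apply hx
    have h2 := congrArg (fun v => C⁻¹ *ᵥ v) h
    simpa [mulVec_mulVec, nonsing_inv_mul C (Ne.isUnit hC)] using h2
  have h3 := hB.dotProduct_mulVec_pos hCx
  convert h3 using 1
  rw [mul_assoc, ← mulVec_mulVec, Matrix.dotProduct_mulVec, star_mulVec,
    mulVec_mulVec]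


lemma stmt5_sand1 {A B P : Matrix (Fin n) (Fin n) ℂ} (h1 : B * A = 1) (h2 : A * B = 1) :
    B * (A * P * A) * B = P := by
  calc B * (A * P * A) * B = (B * A) * P * (A * B) := by simp only [mul_assoc]
  _ = P := by rw [h1, h2, one_mul, mul_one]

lemma stmt5_sand2 {A B P : Matrix (Fin n) (Fin n) ℂ} (h1 : B * A = 1) :
    B * (A * P * B) * A = P := by
  calc B * (A * P * B) * A = (B * A) * P * (B * A) := by simp only [mul_assoc]
  _ = P := by rw [h1, one_mul, mul_one]

open scoped MatrixOrder in
lemma stmt5_key {W D : Matrix (Fin n) (Fin n) ℂ} (hW : W.PosDef) (hD : D.IsHermitian) :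
    ∃ μ : Fin n → ℝ,
      (∀ t : ℝ, (W + t • D).det = W.det * ∏ i, ((1 + t * μ i : ℝ) : ℂ)) ∧
      ((∑ i, μ i : ℝ) : ℂ) = (W⁻¹ * D).trace ∧
      ((W + D).PosDef → ∀ i, 0 < 1 + μ i) ∧
      (D ≠ 0 → ∃ i, μ i ≠ 0) := by
  set S := CFC.sqrt W with hSdef
  have hSH : S.IsHermitian := (CFC.sqrt_nonneg W).posSemidef.isHermitian
  have hSS : S * S = W := CFC.sqrt_mul_sqrt_self W hW.posSemidef.nonneg
  have hdetS : S.det ≠ 0 := by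
    intro h
    have : W.det = 0 := by rw [← hSS, det_mul, h, zero_mul]
    exact hW.det_pos.ne' this
  have hSi : S * S⁻¹ = 1 := mul_nonsing_inv S (Ne.isUnit hdetS)
  have hiS : S⁻¹ * S = 1 := nonsing_inv_mul S (Ne.isUnit hdetS)
  have hTH : (S⁻¹)ᴴ = S⁻¹ := hSH.inv
  have hdetSi : (S⁻¹).det ≠ 0 := by
    intro h
    have : (1 : Matrix (Fin n) (Fin n) ℂ).det = 0 := by rw [← hSi, det_mul, h, mul_zero]
    simp at this
  set M := S⁻¹ * D * S⁻¹ with hMdef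
  have hM : M.IsHermitian := by
    rw [hMdef]
    nth_rewrite 1 [← hTH]
    exact isHermitian_conjTranspose_mul_mul S⁻¹ hD
  have hDSM : S * M * S = D := by
    rw [hMdef]
    simp only [mul_assoc]
    rw [hiS, mul_one, ← mul_assoc, hSi, one_mul]
  set μ := hM.eigenvalues with hμdef
  set U : Matrix (Fin n) (Fin n) ℂ := (hM.eigenvectorUnitary : Matrix (Fin n) (Fin n) ℂ) with hUdef
  have hspec : M = U * diagonal (Complex.ofReal ∘ μ) * star U := hM.spectral_theorem
  have hUU : U * star U = 1 := (Matrix.mem_unitaryGroup_iff).mp hM.eigenvectorUnitary.2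
  have hUU' : star U * U = 1 := (Matrix.mem_unitaryGroup_iff').mp hM.eigenvectorUnitary.2
  have h1 : ∀ t : ℝ, (1 : Matrix (Fin n) (Fin n) ℂ) + t • diagonal (Complex.ofReal ∘ μ)
      = diagonal (fun i => ((1 + t * μ i : ℝ) : ℂ)) := by
    intro t
    rw [← diagonal_one, ← diagonal_smul, diagonal_add]
    funext i
    simp only [Pi.add_apply, Pi.smul_apply, Pi.one_apply, Function.comp_apply, Complex.real_smul]
    push_cast
    ring
  have hdiag : ∀ t : ℝ, 1 + t • M = U * diagonal (fun i => ((1 + t * μ i : ℝ) : ℂ)) * star U := by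
    intro t
    rw [← h1 t, mul_add, add_mul, mul_one, hUU, mul_smul_comm, smul_mul_assoc, ← hspec]
  have hline : ∀ t : ℝ, W + t • D = S * (1 + t • M) * S := by
    intro t
    rw [mul_add, add_mul, mul_one, hSS, mul_smul_comm, smul_mul_assoc, hDSM]
  refine ⟨μ, ?_, ?_, ?_, ?_⟩
  · intro t
    rw [hline t, det_mul, det_mul, hdiag t, det_mul, det_mul, det_diagonal]
    have h2 : S.det * (U.det * (∏ i, ((1 + t * μ i : ℝ) : ℂ)) * (star U).det) * S.det
        = (S * S).det * ((U * star U).det) * (∏ i, ((1 + t * μ i : ℝ) : ℂ)) := by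
      rw [det_mul, det_mul]; ring
    rw [h2, hUU, hSS, det_one, mul_one]
  · have hWinv : W⁻¹ = S⁻¹ * S⁻¹ := by rw [← hSS, Matrix.mul_inv_rev]
    have h1 : (W⁻¹ * D).trace = M.trace := by
      rw [hWinv, hMdef, mul_assoc, trace_mul_cycle, mul_assoc]
    have h2 : M.trace = ∑ i, ((μ i : ℂ)) := by
      rw [hspec, trace_mul_cycle, hUU', one_mul, trace_diagonal]
      simp
    rw [h1, h2]
    push_cast
    rfl
  · intro hPD i
    have hWD : W + D = S * (1 + (1:ℝ) • M) * S := by rw [← hline 1, one_smul]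
    have hC : (S⁻¹ * U).det ≠ 0 := by
      rw [det_mul]
      exact mul_ne_zero hdetSi (by
        intro h
        have : (1 : Matrix (Fin n) (Fin n) ℂ).det = 0 := by rw [← hUU, det_mul, h, zero_mul]
        simp at this)
    have hcong : (S⁻¹ * U)ᴴ * (W + D) * (S⁻¹ * U)
        = diagonal (fun i => ((1 + (1:ℝ) * μ i : ℝ) : ℂ)) := by
      calc (S⁻¹ * U)ᴴ * (W + D) * (S⁻¹ * U)
          = star U * (S⁻¹ * (S * (U * diagonal (fun i => ((1 + (1:ℝ) * μ i : ℝ) : ℂ)) * star U) * S) * S⁻¹) * U := by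
            rw [conjTranspose_mul, hTH, hWD, hdiag 1, ← Matrix.star_eq_conjTranspose]
            simp only [mul_assoc]
        _ = star U * (U * diagonal (fun i => ((1 + (1:ℝ) * μ i : ℝ) : ℂ)) * star U) * U := by
            rw [stmt5_sand1 hiS hSi]
        _ = diagonal (fun i => ((1 + (1:ℝ) * μ i : ℝ) : ℂ)) := stmt5_sand2 hUU'
    have hPDdiag : (diagonal (fun i => ((1 + (1:ℝ) * μ i : ℝ) : ℂ))).PosDef := by
      rw [← hcong]
      exact stmt5_posDef_conj hPD hC
    have h3 := (Matrix.posDef_diagonal_iff).mp hPDdiag i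
    rw [Complex.zero_lt_real] at h3
    linarith
  · intro hDne
    by_contra h
    push_neg at h
    apply hDne
    have hμ0 : (Complex.ofReal ∘ μ : Fin n → ℂ) = 0 := by
      funext i
      simp only [Function.comp_apply, Pi.zero_apply, h i, Complex.ofReal_zero]
    have hM0 : M = 0 := by
      rw [hspec, hμ0, show Matrix.diagonal (0 : Fin n → ℂ) = 0 from diagonal_zero, mul_zero, zero_mul]
    rw [← hDSM, hM0, mul_zero, zero_mul]

lemma stmt5_posDef_combo {x y : Matrix (Fin n) (Fin n) ℂ} (hx : x.PosDef) (hy : y.PosDef)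
    {a b : ℝ} (ha : 0 ≤ a) (hb : 0 ≤ b) (hab : a + b = 1) : (a • x + b • y).PosDef := by
  rcases eq_or_lt_of_le ha with ha0 | ha
  · have hb1 : b = 1 := by linarith
    simpa [← ha0, hb1] using hy
  rcases eq_or_lt_of_le hb with hb0 | hb
  · have ha1 : a = 1 := by linarith
    simpa [← hb0, ha1] using hx
  refine PosDef.of_dotProduct_mulVec_pos ?_ ?_
  · have h1 : (a • x)ᴴ = a • x := by rw [conjTranspose_smul, star_trivial, hx.isHermitian.eq]
    have h2 : (b • y)ᴴ = b • y := by rw [conjTranspose_smul, star_trivial, hy.isHermitian.eq]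
    show (a • x + b • y)ᴴ = _
    rw [conjTranspose_add, h1, h2]
  · intro v hv
    have h1 := hx.dotProduct_mulVec_pos hv
    have h2 := hy.dotProduct_mulVec_pos hv
    have key : star v ⬝ᵥ ((a • x + b • y) *ᵥ v)
        = (a : ℂ) * (star v ⬝ᵥ (x *ᵥ v)) + (b : ℂ) * (star v ⬝ᵥ (y *ᵥ v)) := by
      rw [add_mulVec, smul_mulVec, smul_mulVec, dotProduct_add,
        dotProduct_smul, dotProduct_smul, Complex.real_smul, Complex.real_smul]
    rw [key]
    exact add_pos (mul_pos (Complex.zero_lt_real.mpr ha) h1)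
      (mul_pos (Complex.zero_lt_real.mpr hb) h2)

lemma stmt5_det_re {x : Matrix (Fin n) (Fin n) ℂ} (hx : x.PosDef) :
    x.det = (x.det.re : ℂ) ∧ 0 < x.det.re := by
  have h := hx.det_pos
  rw [Complex.lt_def] at h
  obtain ⟨hre, him⟩ := h
  simp only [Complex.zero_re, Complex.zero_im] at hre him
  exact ⟨Complex.ext (by simp) (by simp [← him]), hre⟩

lemma stmt5_concave (A : Matrix (Fin n) (Fin n) ℂ) :
    StrictConcaveOn ℝ {W : Matrix (Fin n) (Fin n) ℂ | W.PosDef}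
      (fun W => Real.log W.det.re - ((W * A).trace).re) := by
  constructor
  · intro x hx y hy a b ha hb hab
    exact stmt5_posDef_combo hx hy ha hb hab
  · intro x hx y hy hxy a b ha hb hab
    simp only [Set.mem_setOf_eq] at hx hy
    set D := y - x with hDdef
    have hD : D.IsHermitian := hy.isHermitian.sub hx.isHermitian
    have hDne : D ≠ 0 := sub_ne_zero.mpr (Ne.symm hxy)
    obtain ⟨μ, hdet, -, hpos1, hne⟩ := stmt5_key hx hD
    have hxD : x + D = y := by rw [hDdef]; abel
    have hpos : ∀ i, 0 < 1 + μ i := hpos1 (hxD ▸ hy)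
    have hposb : ∀ i, 0 < 1 + b * μ i := by
      intro i
      nlinarith [hpos i, mul_pos hb (hpos i)]
    obtain ⟨d, hd⟩ : ∃ d : ℝ, x.det = (d : ℂ) ∧ 0 < d := ⟨x.det.re, (stmt5_det_re hx).1, (stmt5_det_re hx).2⟩
    have hcombo : a • x + b • y = x + b • D := by
      have ha1 : a = 1 - b := by linarith
      rw [hDdef, ha1]; module
    have hdc : (a • x + b • y).det.re = d * ∏ i, (1 + b * μ i) := by
      rw [hcombo, hdet b, hd.1, ← Complex.ofReal_prod, ← Complex.ofReal_mul, Complex.ofReal_re]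
    have hdy : y.det.re = d * ∏ i, (1 + 1 * μ i) := by
      have h1 := hdet 1
      rw [one_smul, hxD] at h1
      rw [h1, hd.1, ← Complex.ofReal_prod, ← Complex.ofReal_mul, Complex.ofReal_re]
    have hdx : x.det.re = d := by rw [hd.1, Complex.ofReal_re]
    have htr : (((a • x + b • y) * A).trace).re
        = a * ((x * A).trace).re + b * ((y * A).trace).re := by
      rw [add_mul, smul_mul_assoc, smul_mul_assoc, trace_add, trace_smul, trace_smul]
      simp [Complex.real_smul, Complex.mul_re]
    have hPb : (0:ℝ) < ∏ i, (1 + b * μ i) := Finset.prod_pos (fun i _ => hposb i)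
    have hP1 : (0:ℝ) < ∏ i, (1 + 1 * μ i) := Finset.prod_pos (fun i _ => by have := hpos i; linarith)
    -- key sum inequality
    have hkey : ∑ i, b * Real.log (1 + 1 * μ i) < ∑ i, Real.log (1 + b * μ i) := by
      obtain ⟨i₀, hi₀⟩ := hne hDne
      apply Finset.sum_lt_sum
      · intro i _
        have hcc := (strictConcaveOn_log_Ioi.concaveOn).2
          (Set.mem_Ioi.mpr one_pos) (Set.mem_Ioi.mpr (by have := hpos i; linarith : (0:ℝ) < 1 + μ i))
          ha.le hb.le hab
        simp only [smul_eq_mul, Real.log_one, mul_zero, zero_add] at hcc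
        have he : a * 1 + b * (1 + μ i) = 1 + b * μ i := by nlinarith [hab]
        rw [he] at hcc
        convert hcc using 2
        ring
      · refine ⟨i₀, Finset.mem_univ _, ?_⟩
        have hcc := strictConcaveOn_log_Ioi.2
          (Set.mem_Ioi.mpr one_pos) (Set.mem_Ioi.mpr (by have := hpos i₀; linarith : (0:ℝ) < 1 + μ i₀))
          (by intro h; exact hi₀ (by linarith [h] : μ i₀ = 0)) ha hb hab
        simp only [smul_eq_mul, Real.log_one, mul_zero, zero_add] at hcc
        have he : a * 1 + b * (1 + μ i₀) = 1 + b * μ i₀ := by nlinarith [hab]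
        rw [he] at hcc
        convert hcc using 2
        ring
    have hlogb : Real.log (d * ∏ i, (1 + b * μ i))
        = Real.log d + ∑ i, Real.log (1 + b * μ i) := by
      rw [Real.log_mul hd.2.ne' hPb.ne', Real.log_prod (fun i _ => (hposb i).ne')]
    have hlog1 : Real.log (d * ∏ i, (1 + 1 * μ i))
        = Real.log d + ∑ i, Real.log (1 + 1 * μ i) := by
      rw [Real.log_mul hd.2.ne' hP1.ne',
        Real.log_prod (fun i _ => by have := hpos i; intro h; linarith [h] )]
    simp only [smul_eq_mul]
    rw [hdc, hdx, hdy, htr, hlogb, hlog1]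
    have hsum : b * ∑ i, Real.log (1 + 1 * μ i) = ∑ i, b * Real.log (1 + 1 * μ i) :=
      Finset.mul_sum _ _ _
    have hld : a * Real.log d + b * Real.log d = Real.log d := by
      rw [← add_mul, hab, one_mul]
    linarith [hkey, hsum, hld]

lemma stmt5_deriv (A : Matrix (Fin n) (Fin n) ℂ) {W D : Matrix (Fin n) (Fin n) ℂ}
    (hW : W.PosDef) (hD : D.IsHermitian) :
    deriv (fun t : ℝ => Real.log (W + t • D).det.re - (((W + t • D) * A).trace).re) 0
      = ((W⁻¹ * D).trace).re - ((D * A).trace).re := by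
  obtain ⟨μ, hdet, hsum, -, -⟩ := stmt5_key hW hD
  obtain ⟨d, hd1, hd2⟩ : ∃ d : ℝ, W.det = (d:ℂ) ∧ 0 < d :=
    ⟨_, (stmt5_det_re hW).1, (stmt5_det_re hW).2⟩
  have hre : ∀ t : ℝ, (W + t • D).det.re = d * ∏ i, (1 + t * μ i) := by
    intro t
    rw [hdet t, hd1, ← Complex.ofReal_prod, ← Complex.ofReal_mul, Complex.ofReal_re]
  have htr : ∀ t : ℝ, (((W + t • D) * A).trace).re
      = ((W * A).trace).re + t * ((D * A).trace).re := by
    intro t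
    rw [add_mul, smul_mul_assoc, trace_add, trace_smul]
    simp [Complex.real_smul, Complex.mul_re]
  have hfun : (fun t : ℝ => Real.log (W + t • D).det.re - (((W + t • D) * A).trace).re)
      = fun t : ℝ => Real.log (d * ∏ i, (1 + t * μ i))
          - (((W * A).trace).re + t * ((D * A).trace).re) := by
    funext t; rw [hre t, htr t]
  rw [hfun]
  have hprod : HasDerivAt (fun t : ℝ => ∏ i, (1 + t * μ i)) (∑ i, μ i) 0 := by
    have h := HasDerivAt.fun_finsetProd (u := Finset.univ)
      (f := fun i (t : ℝ) => 1 + t * μ i) (f' := fun i => μ i) (x := 0)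
      (fun i _ => by simpa using ((hasDerivAt_id (0:ℝ)).mul_const (μ i)).const_add 1)
    simpa using h
  have hmul : HasDerivAt (fun t : ℝ => d * ∏ i, (1 + t * μ i)) (d * ∑ i, μ i) 0 :=
    hprod.const_mul d
  have hne : d * ∏ i, (1 + (0:ℝ) * μ i) ≠ 0 := by simp [hd2.ne']
  have hlog := hmul.log (by simpa using hne)
  have hlin : HasDerivAt (fun t : ℝ => ((W * A).trace).re + t * ((D * A).trace).re)
      (((D * A).trace).re) 0 := by
    simpa using ((hasDerivAt_id (0:ℝ)).mul_const (((D * A).trace).re)).const_add (((W * A).trace).re)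
  have hfull := hlog.fun_sub hlin
  rw [hfull.deriv]
  have hS : (∑ i, μ i) = ((W⁻¹ * D).trace).re := by
    have h := congrArg Complex.re hsum
    simpa using h
  have hdiv : (d * ∑ i, μ i) / (d * ∏ i, (1 + (0:ℝ) * μ i)) = ∑ i, μ i := by
    simp only [zero_mul, add_zero, Finset.prod_const_one, mul_one]
    field_simp
  rw [hdiv, hS]

lemma stmt5_herm_zero {B : Matrix (Fin n) (Fin n) ℂ} (hB : B.IsHermitian)
    (h : ((B * B).trace).re = 0) : B = 0 := by
  have hc : ∀ i j, B j i = (starRingEnd ℂ) (B i j) := by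
    intro i j
    conv_lhs => rw [← hB.eq]
    simp [conjTranspose_apply]
  have h2 : (B * B).trace = ∑ i, ∑ j, (Complex.normSq (B i j) : ℂ) := by
    rw [Matrix.trace]
    congr 1
    funext i
    rw [Matrix.diag_apply, Matrix.mul_apply]
    congr 1
    funext j
    rw [hc i j, Complex.mul_conj]
  have h3 : ∑ i, ∑ j, Complex.normSq (B i j) = 0 := by
    rw [h2] at h
    simpa using h
  ext i j
  have h4 := (Finset.sum_eq_zero_iff_of_nonneg
    (fun i _ => Finset.sum_nonneg (fun j _ => Complex.normSq_nonneg _))).mp h3 i (Finset.mem_univ _)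
  have h5 := (Finset.sum_eq_zero_iff_of_nonneg
    (fun j _ => Complex.normSq_nonneg _)).mp h4 j (Finset.mem_univ _)
  simpa using Complex.normSq_eq_zero.mp h5

theorem stmt_5 (n : ℕ) (A : Matrix (Fin n) (Fin n) ℂ) (hA : A.PosDef) :
    StrictConcaveOn ℝ {W : Matrix (Fin n) (Fin n) ℂ | W.PosDef}
      (fun W => Real.log W.det.re - ((W * A).trace).re) ∧
    ∀ W : Matrix (Fin n) (Fin n) ℂ, W.PosDef →
      ((∀ D : Matrix (Fin n) (Fin n) ℂ, D.IsHermitian →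
          deriv (fun t : ℝ =>
            Real.log (W + t • D).det.re - (((W + t • D) * A).trace).re) 0 = 0)
        ↔ W = A⁻¹) := by
  constructor
  · exact stmt5_concave A
  · intro W hW
    constructor
    · intro hstat
      have hzero : ∀ D : Matrix (Fin n) (Fin n) ℂ, D.IsHermitian →
          ((W⁻¹ * D).trace).re = ((D * A).trace).re := by
        intro D hD
        have h := hstat D hD
        rw [stmt5_deriv A hW hD] at h
        linarith
      set B := W⁻¹ - A with hBdef
      have hB : B.IsHermitian := (hW.inv).isHermitian.sub hA.isHermitian
      have hBB : ((B * B).trace).re = 0 := by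
        have h := hzero B hB
        have e : (B * B).trace = (W⁻¹ * B).trace - (A * B).trace := by
          nth_rewrite 1 [hBdef]
          rw [Matrix.sub_mul, trace_sub]
        rw [e, Complex.sub_re, h, trace_mul_comm]
        ring
      have hB0 : B = 0 := stmt5_herm_zero hB hBB
      have hWA : W⁻¹ = A := by rwa [hBdef, sub_eq_zero] at hB0
      rw [← hWA, Matrix.nonsing_inv_nonsing_inv W (Ne.isUnit hW.det_pos.ne')]
    · intro hWA D hD
      rw [stmt5_deriv A hW hD, hWA,
        Matrix.nonsing_inv_nonsing_inv A (Ne.isUnit hA.det_pos.ne'), trace_mul_comm]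
      ring
end

section
/- With J = σ²I + Σ_{all users} H_ℓ V_ℓ V_ℓ^H H_ℓ^H positive definite (σ > 0), H the direct channel, V the direct beamformer, and E^mmse = I - V^H H^H J⁻¹ H V the MMSE matrix, E^mmse is Hermitian positive definite. -/
open Matrix ComplexOrder

theorem stmt_7 (N M d : ℕ) (σ : ℝ) (hσ : 0 < σ)
    (H : Matrix (Fin N) (Fin M) ℂ) (V : Matrix (Fin M) (Fin d) ℂ)
    (K : Matrix (Fin N) (Fin N) ℂ) (hK : K.PosSemidef)
    (J : Matrix (Fin N) (Fin N) ℂ)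
    (hJ : J = σ^2 • (1 : Matrix (Fin N) (Fin N) ℂ) + H * V * Vᴴ * Hᴴ + K) :
    (1 - Vᴴ * Hᴴ * J⁻¹ * H * V).PosDef := by
  set A : Matrix (Fin N) (Fin d) ℂ := H * V with hA
  have hs1 : (σ^2 • (1 : Matrix (Fin N) (Fin N) ℂ)).PosDef := by
    have h : σ^2 • (1 : Matrix (Fin N) (Fin N) ℂ)
        = Matrix.diagonal (fun _ => (σ^2 : ℂ)) := by
      ext i j
      by_cases hij : i = j <;>
        simp [Matrix.diagonal, Matrix.one_apply, Matrix.smul_apply, hij]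
    rw [h]
    refine Matrix.posDef_diagonal_iff.mpr fun i => ?_
    exact_mod_cast (by positivity : (0:ℝ) < σ^2)
  set S : Matrix (Fin N) (Fin N) ℂ := σ^2 • 1 + K with hS
  have hSpd : S.PosDef := hs1.add_posSemidef hK
  set B : Matrix (Fin d) (Fin d) ℂ := Aᴴ * S⁻¹ * A with hB
  have hBpsd : B.PosSemidef := hSpd.inv.posSemidef.conjTranspose_mul_mul_same A
  have hIB : (1 + B).PosDef := Matrix.PosDef.one.add_posSemidef hBpsd
  have hJJ : J = S + A * Aᴴ := by
    rw [hJ, hS, hA, Matrix.conjTranspose_mul]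
    simp only [Matrix.mul_assoc]
    abel
  have hJpd : J.PosDef := by
    rw [hJJ, hA, Matrix.conjTranspose_mul, ← Matrix.mul_assoc]
    exact hSpd.add_posSemidef
      (by simpa [Matrix.conjTranspose_mul, Matrix.mul_assoc] using
        Matrix.posSemidef_self_mul_conjTranspose (H * V))
  have hSu : IsUnit S.det := Matrix.isUnit_iff_isUnit_det _ |>.1 hSpd.isUnit
  have hJu : IsUnit J.det := Matrix.isUnit_iff_isUnit_det _ |>.1 hJpd.isUnit
  have hIBu : IsUnit (1 + B).det := Matrix.isUnit_iff_isUnit_det _ |>.1 hIB.isUnit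
  have key : J⁻¹ * A = S⁻¹ * A * (1 + B)⁻¹ := by
    have h1 : J * (S⁻¹ * A * (1 + B)⁻¹) = A := by
      calc J * (S⁻¹ * A * (1 + B)⁻¹)
          = (S + A * Aᴴ) * (S⁻¹ * A * (1 + B)⁻¹) := by rw [hJJ]
        _ = S * S⁻¹ * A * (1 + B)⁻¹ + A * (Aᴴ * S⁻¹ * A) * (1 + B)⁻¹ := by
            simp only [Matrix.add_mul, Matrix.mul_assoc]
        _ = A * ((1 + B) * (1 + B)⁻¹) := by
            rw [Matrix.mul_nonsing_inv _ hSu, Matrix.one_mul, ← hB]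
            simp only [Matrix.add_mul, Matrix.mul_add, Matrix.one_mul, Matrix.mul_assoc]
        _ = A := by rw [Matrix.mul_nonsing_inv _ hIBu, Matrix.mul_one]
    calc J⁻¹ * A = J⁻¹ * (J * (S⁻¹ * A * (1 + B)⁻¹)) := by rw [h1]
      _ = S⁻¹ * A * (1 + B)⁻¹ := by
          rw [← Matrix.mul_assoc, Matrix.nonsing_inv_mul _ hJu, Matrix.one_mul]
  have hE : 1 - Vᴴ * Hᴴ * J⁻¹ * H * V = (1 + B)⁻¹ := by
    have h2 : Vᴴ * Hᴴ * J⁻¹ * H * V = Aᴴ * (J⁻¹ * A) := by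
      rw [hA, Matrix.conjTranspose_mul]
      simp only [Matrix.mul_assoc]
    rw [h2, key, ← Matrix.mul_assoc, ← Matrix.mul_assoc, ← hB]
    have h3 : (1 : Matrix (Fin d) (Fin d) ℂ) = (1 + B) * (1 + B)⁻¹ :=
      (Matrix.mul_nonsing_inv _ hIBu).symm
    nth_rewrite 1 [h3]
    simp only [Matrix.add_mul, Matrix.one_mul]
    abel
  rw [hE]
  exact hIB.inv
end

section
/- In the setting of the 3-user channel with H_ii = I₂, H_im = [[0,2],[2,0]] (i≠m), σ² = 1, and power constraints Tr(Q_i) ≤ 1, Q_i ≽ 0: for any feasible (Q₁,Q₂,Q₃), min_i R_i(Q) ≤ 1 (rates in bits, log base 2), i.e., the optimal max-min value is exactly 1. -/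
set_option maxHeartbeats 1000000


open Matrix ComplexOrder

/-- Cross channel `H = [[0,2],[2,0]]`. -/
noncomputable def Hc : Matrix (Fin 2) (Fin 2) ℂ := !![0, 2; 2, 0]

/-- Rate (in bits) of a user with own covariance `Qi` facing interference
from covariances `Qm`, `Qm'` through the cross channel `Hc`. -/
noncomputable def rate3 (Qi Qm Qm' : Matrix (Fin 2) (Fin 2) ℂ) : ℝ :=
  Real.logb 2 ((1 + Qi * (1 + (Hc * Qm * Hcᴴ + Hc * Qm' * Hcᴴ))⁻¹).det.re)

noncomputable def cm (a b x y : ℝ) : Matrix (Fin 2) (Fin 2) ℂ :=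
  !![(a : ℂ), x + y * Complex.I; x - y * Complex.I, (b : ℂ)]

lemma hH : Hcᴴ = Hc := by
  ext i j; fin_cases i <;> fin_cases j <;> simp [Hc]

lemma scalar_cs (a b A B x y X Y : ℝ) (ha : 0 ≤ a) (hb : 0 ≤ b) (hA : 0 ≤ A) (hB : 0 ≤ B)
    (h1 : x^2 + y^2 ≤ a*b) (h2 : X^2 + Y^2 ≤ A*B) : 2*(x*X + y*Y) ≤ a*B + b*A := by
  have h4 : 0 ≤ a*B + b*A := add_nonneg (mul_nonneg ha hB) (mul_nonneg hb hA)
  have hm : (x^2+y^2) * (X^2+Y^2) ≤ (a*b) * (A*B) :=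
    mul_le_mul h1 h2 (by positivity) (mul_nonneg ha hb)
  have h3 : (2*(x*X+y*Y))^2 ≤ (a*B+b*A)^2 := by
    nlinarith [sq_nonneg (a*B - b*A), sq_nonneg (x*Y - y*X)]
  nlinarith [h3, h4]

lemma psd_diag_nonneg {Q : Matrix (Fin 2) (Fin 2) ℂ} (h : Q.PosSemidef) (i : Fin 2) :
    0 ≤ Q i i := by
  have h0 := h.2 (Finsupp.single i 1)
  fin_cases i <;> simpa using h0

lemma psd_det_nonneg {Q : Matrix (Fin 2) (Fin 2) ℂ} (h : Q.PosSemidef) : 0 ≤ Q.det := by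
  rw [h.isHermitian.det_eq_prod_eigenvalues]
  have : (0:ℝ) ≤ ∏ i, h.isHermitian.eigenvalues i :=
    Finset.prod_nonneg fun i _ => h.eigenvalues_nonneg i
  rw [← RCLike.ofReal_prod]
  exact Complex.zero_le_real.mpr this

lemma eta_psd {Q : Matrix (Fin 2) (Fin 2) ℂ} (h : Q.PosSemidef) :
    Q = cm (Q 0 0).re (Q 1 1).re (Q 0 1).re (Q 0 1).im := by
  have h10 : Q 1 0 = (starRingEnd ℂ) (Q 0 1) := (h.isHermitian.apply 1 0).symm
  have hi : ∀ i, (Q i i).im = 0 := fun i =>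
    (Complex.le_def.mp (psd_diag_nonneg h i)).2.symm
  ext i j
  fin_cases i <;> fin_cases j <;> simp [cm, Complex.ext_iff, hi, h10]

lemma det_cm (a b x y : ℝ) : (cm a b x y).det = ((a*b - (x^2+y^2) : ℝ) : ℂ) := by
  simp [cm, Matrix.det_fin_two]
  push_cast
  linear_combination (-(y:ℂ)^2) * Complex.I_sq

lemma trace_cm (a b x y : ℝ) : (cm a b x y).trace = ((a + b : ℝ) : ℂ) := by
  simp [cm, Matrix.trace_fin_two]

lemma detM_eq (a2 b2 x2 y2 a3 b3 x3 y3 : ℝ) :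
    (1 + (Hc * cm a2 b2 x2 y2 * Hcᴴ + Hc * cm a3 b3 x3 y3 * Hcᴴ)).det =
      (((1 + 4*(b2+b3)) * (1 + 4*(a2+a3)) - ((4*(x2+x3))^2 + (4*(y2+y3))^2) : ℝ) : ℂ) := by
  rw [hH]
  simp [Hc, cm, Matrix.mul_fin_two, Matrix.one_fin_two, Matrix.det_fin_two, Matrix.add_apply]
  linear_combination (16*((y2:ℂ) + (y3:ℂ))^2) * Complex.I_sq

lemma detMQ_eq (a1 b1 x1 y1 a2 b2 x2 y2 a3 b3 x3 y3 : ℝ) :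
    (1 + (Hc * cm a2 b2 x2 y2 * Hcᴴ + Hc * cm a3 b3 x3 y3 * Hcᴴ) + cm a1 b1 x1 y1).det =
      (((1 + 4*(b2+b3) + a1) * (1 + 4*(a2+a3) + b1)
        - ((4*(x2+x3) + x1)^2 + (4*(y2+y3) - y1)^2) : ℝ) : ℂ) := by
  rw [hH]
  simp [Hc, cm, Matrix.mul_fin_two, Matrix.one_fin_two, Matrix.det_fin_two, Matrix.add_apply]
  linear_combination ((4*(y2:ℂ) + 4*(y3:ℂ) - y1)^2) * Complex.I_sq

lemma rate_le_one (Q₁ Q₂ Q₃ : Matrix (Fin 2) (Fin 2) ℂ)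
    (h₁ : Q₁.PosSemidef) (h₂ : Q₂.PosSemidef) (h₃ : Q₃.PosSemidef)
    (ht : Q₁.trace.re ≤ 1)
    (hd₂ : Q₁.det.re ≤ Q₂.det.re) (hd₃ : Q₁.det.re ≤ Q₃.det.re) :
    rate3 Q₁ Q₂ Q₃ ≤ 1 := by
  set N : Matrix (Fin 2) (Fin 2) ℂ := Hc * Q₂ * Hcᴴ + Hc * Q₃ * Hcᴴ with hNdef
  set M : Matrix (Fin 2) (Fin 2) ℂ := 1 + N with hMdef
  have hN : N.PosSemidef :=
    (h₂.mul_mul_conjTranspose_same Hc).add (h₃.mul_mul_conjTranspose_same Hc)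
  have hM : M.PosDef := Matrix.PosDef.one.add_posSemidef hN
  have hMQ : (M + Q₁).PosDef := hM.add_posSemidef h₁
  have hdM : (0:ℂ) < M.det := hM.det_pos
  have hdMr : 0 < M.det.re := (Complex.lt_def.mp hdM).1
  have hdMi : M.det.im = 0 := ((Complex.lt_def.mp hdM).2).symm
  have hdMQr : 0 < (M + Q₁).det.re := (Complex.lt_def.mp hMQ.det_pos).1
  have hdMQi : (M + Q₁).det.im = 0 := ((Complex.lt_def.mp hMQ.det_pos).2).symm
  have hU : IsUnit M.det := isUnit_iff_ne_zero.mpr hdM.ne'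
  have he : 1 + Q₁ * M⁻¹ = (M + Q₁) * M⁻¹ := by
    rw [Matrix.add_mul, Matrix.mul_nonsing_inv M hU]
  have hdet : (1 + Q₁ * M⁻¹).det = (M + Q₁).det * M.det⁻¹ := by
    rw [he, Matrix.det_mul, Matrix.det_nonsing_inv, Ring.inverse_eq_inv']
  -- scalar data
  obtain ⟨ha1, hia1⟩ := Complex.le_def.mp (psd_diag_nonneg h₁ 0)
  obtain ⟨hb1, _⟩ := Complex.le_def.mp (psd_diag_nonneg h₁ 1)
  obtain ⟨ha2, _⟩ := Complex.le_def.mp (psd_diag_nonneg h₂ 0)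
  obtain ⟨hb2, _⟩ := Complex.le_def.mp (psd_diag_nonneg h₂ 1)
  obtain ⟨ha3, _⟩ := Complex.le_def.mp (psd_diag_nonneg h₃ 0)
  obtain ⟨hb3, _⟩ := Complex.le_def.mp (psd_diag_nonneg h₃ 1)
  obtain ⟨hD1, _⟩ := Complex.le_def.mp (psd_det_nonneg h₁)
  obtain ⟨hD2, _⟩ := Complex.le_def.mp (psd_det_nonneg h₂)
  obtain ⟨hD3, _⟩ := Complex.le_def.mp (psd_det_nonneg h₃)
  have e₁ := eta_psd h₁; have e₂ := eta_psd h₂; have e₃ := eta_psd h₃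
  rw [e₁, trace_cm, Complex.ofReal_re] at ht
  rw [e₁, det_cm, Complex.ofReal_re] at hD1 hd₂ hd₃
  rw [e₂, det_cm, Complex.ofReal_re] at hD2 hd₂
  rw [e₃, det_cm, Complex.ofReal_re] at hD3 hd₃
  simp only [Complex.zero_re] at ha1 hb1 ha2 hb2 ha3 hb3 hD1 hD2 hD3
  set a1 := (Q₁ 0 0).re; set b1 := (Q₁ 1 1).re; set x1 := (Q₁ 0 1).re; set y1 := (Q₁ 0 1).im
  set a2 := (Q₂ 0 0).re; set b2 := (Q₂ 1 1).re; set x2 := (Q₂ 0 1).re; set y2 := (Q₂ 0 1).im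
  set a3 := (Q₃ 0 0).re; set b3 := (Q₃ 1 1).re; set x3 := (Q₃ 0 1).re; set y3 := (Q₃ 0 1).im
  have key : (M + Q₁).det.re ≤ 2 * M.det.re := by
    rw [hMdef, hNdef, e₁, e₂, e₃, detMQ_eq, detM_eq, Complex.ofReal_re, Complex.ofReal_re]
    have hdet1 : x1^2 + y1^2 ≤ a1*b1 := by linarith
    have hdet2 : x2^2 + y2^2 ≤ a2*b2 := by linarith
    have hdet3 : x3^2 + y3^2 ≤ a3*b3 := by linarith
    have cs1 : 2*(x2*x3 + y2*y3) ≤ a2*b3 + b2*a3 :=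
      scalar_cs a2 b2 a3 b3 x2 y2 x3 y3 ha2 hb2 ha3 hb3 hdet2 hdet3
    have hK : (x2+x3)^2 + (y2+y3)^2 ≤ (a2+a3)*(b2+b3) := by nlinarith [cs1, hdet2, hdet3]
    have cs2 : 2*((-x1)*(x2+x3) + y1*(y2+y3)) ≤ a1*(b2+b3) + b1*(a2+a3) :=
      scalar_cs a1 b1 (a2+a3) (b2+b3) (-x1) y1 (x2+x3) (y2+y3) ha1 hb1
        (by linarith) (by linarith) (by nlinarith [hdet1]) hK
    nlinarith [cs1, cs2, hD1, hd₂, hd₃, hdet1, ht,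
      mul_nonneg (by linarith : (0:ℝ) ≤ 1 - a1 - b1) (by linarith : (0:ℝ) ≤ a2 + a3),
      mul_nonneg (by linarith : (0:ℝ) ≤ 1 - a1 - b1) (by linarith : (0:ℝ) ≤ b2 + b3)]
  have hre : (1 + Q₁ * M⁻¹).det.re = (M + Q₁).det.re / M.det.re := by
    rw [hdet, Complex.mul_re, Complex.inv_re, Complex.inv_im, hdMi, hdMQi]
    simp [Complex.normSq, hdMi]
    ring
  have hpos : 0 < (1 + Q₁ * M⁻¹).det.re := by
    rw [hre]; positivity
  have hle2 : (1 + Q₁ * M⁻¹).det.re ≤ 2 := by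
    rw [hre, div_le_iff₀ hdMr]; linarith
  unfold rate3
  calc Real.logb 2 ((1 + Q₁ * M⁻¹).det.re) ≤ Real.logb 2 2 :=
        Real.logb_le_logb_of_le (by norm_num) hpos hle2
    _ = 1 := Real.logb_self_eq_one (by norm_num)

noncomputable def Qd : Matrix (Fin 2) (Fin 2) ℂ := !![1, 0; 0, 0]

lemma Qd_psd : Qd.PosSemidef := by
  have : Qd = Matrix.diagonal ![1, 0] := by
    ext i j; fin_cases i <;> fin_cases j <;> simp [Qd, Matrix.diagonal]
  rw [this]
  exact Matrix.PosSemidef.diagonal (by intro i; fin_cases i <;> norm_num)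

lemma Qd_trace : Qd.trace.re ≤ 1 := by simp [Qd, Matrix.trace_fin_two]

lemma Qd_rate : rate3 Qd Qd Qd = 1 := by
  have hm : (1 + (Hc * Qd * Hcᴴ + Hc * Qd * Hcᴴ)) = !![(1:ℂ), 0; 0, 9] := by
    rw [hH]
    ext i j
    fin_cases i <;> fin_cases j <;>
      simp [Hc, Qd, Matrix.mul_fin_two, Matrix.one_fin_two, Matrix.add_apply] <;> norm_num
  have hinv : (1 + (Hc * Qd * Hcᴴ + Hc * Qd * Hcᴴ))⁻¹ = !![(1:ℂ), 0; 0, (9:ℂ)⁻¹] := by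
    rw [hm]
    apply Matrix.inv_eq_right_inv
    ext i j
    fin_cases i <;> fin_cases j <;>
      simp [Matrix.mul_fin_two, Matrix.one_fin_two] <;> norm_num
  have hdet : (1 + Qd * (1 + (Hc * Qd * Hcᴴ + Hc * Qd * Hcᴴ))⁻¹).det = 2 := by
    rw [hinv]
    simp [Qd, Matrix.mul_fin_two, Matrix.one_fin_two, Matrix.det_fin_two, Matrix.add_apply]
    norm_num
  unfold rate3
  rw [hdet]
  norm_num [Real.logb_self_eq_one]

theorem stmt_15 :
    (∀ Q₁ Q₂ Q₃ : Matrix (Fin 2) (Fin 2) ℂ,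
        Q₁.PosSemidef → Q₂.PosSemidef → Q₃.PosSemidef →
        (Q₁.trace).re ≤ 1 → (Q₂.trace).re ≤ 1 → (Q₃.trace).re ≤ 1 →
        min (min (rate3 Q₁ Q₂ Q₃) (rate3 Q₂ Q₁ Q₃)) (rate3 Q₃ Q₁ Q₂) ≤ 1) ∧
      (∃ Q₁ Q₂ Q₃ : Matrix (Fin 2) (Fin 2) ℂ,
        Q₁.PosSemidef ∧ Q₂.PosSemidef ∧ Q₃.PosSemidef ∧
        (Q₁.trace).re ≤ 1 ∧ (Q₂.trace).re ≤ 1 ∧ (Q₃.trace).re ≤ 1 ∧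
        min (min (rate3 Q₁ Q₂ Q₃) (rate3 Q₂ Q₁ Q₃)) (rate3 Q₃ Q₁ Q₂) = 1) := by
  constructor
  · intro Q₁ Q₂ Q₃ h₁ h₂ h₃ ht₁ ht₂ ht₃
    rcases le_total Q₁.det.re Q₂.det.re with h12 | h12
    · rcases le_total Q₁.det.re Q₃.det.re with h13 | h13
      · exact le_trans (le_trans (min_le_left _ _) (min_le_left _ _))
          (rate_le_one Q₁ Q₂ Q₃ h₁ h₂ h₃ ht₁ h12 h13)
      · exact le_trans (min_le_right _ _)
          (rate_le_one Q₃ Q₁ Q₂ h₃ h₁ h₂ ht₃ h13 (le_trans h13 h12))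
    · rcases le_total Q₂.det.re Q₃.det.re with h23 | h23
      · exact le_trans (le_trans (min_le_left _ _) (min_le_right _ _))
          (rate_le_one Q₂ Q₁ Q₃ h₂ h₁ h₃ ht₂ h12 h23)
      · exact le_trans (min_le_right _ _)
          (rate_le_one Q₃ Q₁ Q₂ h₃ h₁ h₂ ht₃ (le_trans h23 h12) h23)
  · exact ⟨Qd, Qd, Qd, Qd_psd, Qd_psd, Qd_psd, Qd_trace, Qd_trace, Qd_trace, by
      rw [Qd_rate, min_self, min_self]⟩
end

section
/- For Hermitian PSD matrices S ≠ 0 and K ≽ 0 and σ > 0, the function t ↦ log det(I + t S (σ² I + t K)⁻¹) is monotonically nondecreasing on t ≥ 0, and strictly increasing if S ≻ 0 (or more generally if S is nonzero). -/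
open Matrix ComplexOrder
open scoped MatrixOrder

section aux

variable {m : Type*} [Fintype m] [DecidableEq m]

lemma aux_star_of_nonneg {c : ℂ} (hc : 0 ≤ c) : star c = c := by
  rw [Complex.star_def, Complex.conj_eq_iff_im]
  exact ((Complex.le_def.mp hc).2).symm

lemma aux_psd_smul {A : Matrix m m ℂ} (hA : A.PosSemidef) {c : ℂ} (hc : 0 ≤ c) :
    (c • A).PosSemidef := by
  refine posSemidef_iff_dotProduct_mulVec.mpr ⟨?_, fun x => ?_⟩
  · show (c • A)ᴴ = c • A
    rw [conjTranspose_smul, aux_star_of_nonneg hc, hA.1.eq]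
  · rw [smul_mulVec, dotProduct_smul, smul_eq_mul]
    exact mul_nonneg hc (hA.dotProduct_mulVec_nonneg x)

lemma aux_pd_smul {A : Matrix m m ℂ} (hA : A.PosDef) {c : ℂ} (hc : 0 < c) :
    (c • A).PosDef := by
  refine posDef_iff_dotProduct_mulVec.mpr ⟨?_, fun x hx => ?_⟩
  · show (c • A)ᴴ = c • A
    rw [conjTranspose_smul, aux_star_of_nonneg hc.le, hA.1.eq]
  · rw [smul_mulVec, dotProduct_smul, smul_eq_mul]
    exact mul_pos hc (hA.dotProduct_mulVec_pos hx)

lemma aux_rsmul (r : ℝ) (A : Matrix m m ℂ) : r • A = (r : ℂ) • A := by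
  ext i j
  simp [Matrix.smul_apply, Complex.real_smul]

/-- For `M` PSD, `det (1 + M)` is a real number `≥ 1`, and `> 1` if `M ≠ 0`. -/
lemma aux_det_one_add_psd {M : Matrix m m ℂ} (hM : M.PosSemidef) :
    (1 + M).det.im = 0 ∧ 1 ≤ (1 + M).det.re ∧ (M ≠ 0 → 1 < (1 + M).det.re) := by
  classical
  have hH := hM.1
  set U : Matrix m m ℂ := (hH.eigenvectorUnitary : Matrix m m ℂ) with hUdef
  have hU : U * star U = 1 := mem_unitaryGroup_iff.mp hH.eigenvectorUnitary.2
  have hdiag : diagonal (fun i => (1 : ℂ) + (hH.eigenvalues i : ℂ))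
      = 1 + diagonal (RCLike.ofReal ∘ hH.eigenvalues) := by
    rw [← diagonal_one, diagonal_add]
    rfl
  have h1M : 1 + M = U * diagonal (fun i => (1 : ℂ) + (hH.eigenvalues i : ℂ)) * star U := by
    rw [hdiag, mul_add, add_mul, mul_one, hU]
    conv_lhs => rw [hH.spectral_theorem, Unitary.conjStarAlgAut_apply]
  have hdet : (1 + M).det = ((∏ i, (1 + hH.eigenvalues i) : ℝ) : ℂ) := by
    rw [h1M, det_mul_right_comm, hU, one_mul, det_diagonal]
    push_cast
    rfl
  have h1le : ∀ i : m, (1 : ℝ) ≤ 1 + hH.eigenvalues i := fun i => by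
    linarith [hM.eigenvalues_nonneg i]
  refine ⟨by rw [hdet]; exact Complex.ofReal_im _, ?_, ?_⟩
  · rw [hdet, Complex.ofReal_re]
    calc (1 : ℝ) = ∏ _i : m, (1 : ℝ) := by simp
    _ ≤ ∏ i, (1 + hH.eigenvalues i) :=
        Finset.prod_le_prod (fun _ _ => zero_le_one) (fun i _ => h1le i)
  · intro hM0
    have : ∃ i, hH.eigenvalues i ≠ 0 := by
      by_contra h
      push_neg at h
      apply hM0
      have hfz : (RCLike.ofReal ∘ hH.eigenvalues : m → ℂ) = fun _ => 0 :=
        funext fun i => by simp [h i]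
      have : diagonal (RCLike.ofReal ∘ hH.eigenvalues) = (0 : Matrix m m ℂ) := by
        rw [hfz, diagonal_zero]
      rw [hH.spectral_theorem, this, map_zero]
    obtain ⟨i, hi⟩ := this
    have hipos : 0 < hH.eigenvalues i := lt_of_le_of_ne (hM.eigenvalues_nonneg i) (Ne.symm hi)
    rw [hdet, Complex.ofReal_re]
    calc (1 : ℝ) = ∏ _i : m, (1 : ℝ) := by simp
    _ < ∏ i, (1 + hH.eigenvalues i) := by
        refine Finset.prod_lt_prod (fun _ _ => one_pos) (fun j _ => h1le j) ⟨i, Finset.mem_univ i, by linarith⟩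

/-- det monotonicity under PSD perturbation of a positive definite matrix. -/
lemma aux_det_step {X D : Matrix m m ℂ} (hX : X.PosDef) (hD : D.PosSemidef) :
    X.det.re ≤ (X + D).det.re ∧ (D ≠ 0 → X.det.re < (X + D).det.re) := by
  classical
  set R := CFC.sqrt X with hRdef
  have hR : R.PosSemidef := (CFC.sqrt_nonneg X).posSemidef
  have hRR : R * R = X := CFC.sqrt_mul_sqrt_self X hX.posSemidef.nonneg
  have hdetR : IsUnit R.det := by
    have h1 : R.det * R.det = X.det := by rw [← det_mul, hRR]
    have h2 : X.det ≠ 0 := hX.det_pos.ne'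
    refine (mul_ne_zero_iff.mp (h1 ▸ h2)).1.isUnit
  have hRinv : R * R⁻¹ = 1 := mul_nonsing_inv _ hdetR
  have hRinv' : R⁻¹ * R = 1 := nonsing_inv_mul _ hdetR
  have hRiH : (R⁻¹)ᴴ = R⁻¹ := hR.1.inv
  set M := R⁻¹ * D * R⁻¹ with hMdef
  have hM : M.PosSemidef := by
    have := hD.mul_mul_conjTranspose_same R⁻¹
    rwa [hRiH] at this
  have hRMR : R * M * R = D := by
    rw [hMdef]
    simp only [← Matrix.mul_assoc]
    rw [hRinv, one_mul, Matrix.mul_assoc, hRinv', mul_one]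
  have hXD : X + D = R * (1 + M) * R := by
    rw [mul_add, add_mul, mul_one, hRR, hRMR]
  have hdet : (X + D).det = X.det * (1 + M).det := by
    rw [hXD, det_mul, det_mul, ← hRR, det_mul]
    ring
  obtain ⟨him, hre, hstrict⟩ := aux_det_one_add_psd hM
  have hXlt := hX.det_pos
  rw [Complex.lt_def] at hXlt
  obtain ⟨hXre, hXim⟩ := hXlt
  simp only [Complex.zero_re, Complex.zero_im] at hXre hXim
  have hmulre : (X + D).det.re = X.det.re * (1 + M).det.re := by
    rw [hdet, Complex.mul_re, ← hXim, him]
    ring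
  constructor
  · rw [hmulre]; nlinarith
  · intro hD0
    have hM0 : M ≠ 0 := by
      intro h
      apply hD0
      rw [← hRMR, h, mul_zero, zero_mul]
    have := hstrict hM0
    rw [hmulre]; nlinarith

end aux

theorem stmt_17 (n : ℕ) (S K : Matrix (Fin n) (Fin n) ℂ)
    (hS : S.PosSemidef) (hK : K.PosSemidef) (σ : ℝ) (hσ : 0 < σ) :
    MonotoneOn (fun t : ℝ =>
        Real.log ((1 + t • (S * (σ^2 • (1 : Matrix (Fin n) (Fin n) ℂ)
          + t • K)⁻¹)).det.re)) (Set.Ici 0) ∧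
      (S ≠ 0 → StrictMonoOn (fun t : ℝ =>
        Real.log ((1 + t • (S * (σ^2 • (1 : Matrix (Fin n) (Fin n) ℂ)
          + t • K)⁻¹)).det.re)) (Set.Ici 0)) := by
  classical
  set Q := CFC.sqrt S with hQdef
  have hQ : Q.PosSemidef := (CFC.sqrt_nonneg S).posSemidef
  have hQH : Qᴴ = Q := hQ.1
  have hSQ : Q * Q = S := CFC.sqrt_mul_sqrt_self S hS.nonneg
  set σc : ℂ := ((σ^2 : ℝ) : ℂ) with hσcdef
  have hσc : 0 < σc := Complex.zero_lt_real.mpr (by positivity)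
  set Mt : ℝ → Matrix (Fin n) (Fin n) ℂ := fun t => σc • (1 : Matrix (Fin n) (Fin n) ℂ) + (t : ℂ) • K with hMtdef
  have hMt : ∀ t : ℝ, 0 ≤ t → (Mt t).PosDef := by
    intro t ht
    exact (aux_pd_smul Matrix.PosDef.one hσc).add_posSemidef
      (aux_psd_smul hK (Complex.zero_le_real.mpr ht))
  set G : ℝ → ℝ := fun t => (1 + Q * ((t : ℂ) • (Mt t)⁻¹) * Q).det.re with hGdef
  -- rewrite the statement's function as G
  have hfun : ∀ t : ℝ,
      (1 + t • (S * (σ^2 • (1 : Matrix (Fin n) (Fin n) ℂ) + t • K)⁻¹)).det.re = G t := by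
    intro t
    have h1 : σ^2 • (1 : Matrix (Fin n) (Fin n) ℂ) + t • K = Mt t := by
      rw [aux_rsmul, aux_rsmul]
    have h2 : t • (S * (Mt t)⁻¹) = Q * (Q * ((t : ℂ) • (Mt t)⁻¹)) := by
      rw [aux_rsmul, ← hSQ, mul_smul_comm, mul_smul_comm, Matrix.mul_assoc]
    rw [h1, h2, hGdef]
    congr 1
    exact det_one_add_mul_comm Q _
  -- PSD facts about N t = t • (Mt t)⁻¹
  have hN : ∀ t : ℝ, 0 ≤ t → (((t : ℂ) • (Mt t)⁻¹)).PosSemidef := fun t ht =>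
    aux_psd_smul (hMt t ht).inv.posSemidef (Complex.zero_le_real.mpr ht)
  have hQNQ : ∀ t : ℝ, 0 ≤ t → (Q * ((t : ℂ) • (Mt t)⁻¹) * Q).PosSemidef := by
    intro t ht
    have := (hN t ht).mul_mul_conjTranspose_same Q
    rwa [hQH] at this
  have hG1 : ∀ t : ℝ, 0 ≤ t → 1 ≤ G t := by
    intro t ht
    exact (aux_det_one_add_psd (hQNQ t ht)).2.1
  -- key monotonicity step
  have hkey : ∀ s t : ℝ, 0 ≤ s → s < t → G s ≤ G t ∧ (S ≠ 0 → G s < G t) := by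
    intro s t hs hst
    have ht : (0:ℝ) ≤ t := le_of_lt (lt_of_le_of_lt hs hst)
    set A := Mt s with hAdef
    set B := Mt t with hBdef
    have hA : A.PosDef := hMt s hs
    have hB : B.PosDef := hMt t ht
    have hAd : IsUnit A.det := hA.det_pos.ne'.isUnit
    have hBd : IsUnit B.det := hB.det_pos.ne'.isUnit
    -- A * B is positive definite
    have hABexp : A * B = (σc * σc) • (1 : Matrix (Fin n) (Fin n) ℂ)
        + ((σc * t) • K + (((s : ℂ) * σc) • K + ((s : ℂ) * t) • (K * K))) := by
      rw [hAdef, hBdef, hMtdef]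
      simp only [add_mul, mul_add, smul_mul_assoc, mul_smul_comm, smul_smul,
        one_mul, mul_one]
      module
    have hKK : (K * K).PosSemidef := by
      have := posSemidef_conjTranspose_mul_self K
      rwa [hK.1.eq] at this
    have hAB : (A * B).PosDef := by
      rw [hABexp]
      refine (aux_pd_smul Matrix.PosDef.one (mul_pos hσc hσc)).add_posSemidef ?_
      refine ((aux_psd_smul hK (mul_nonneg hσc.le (Complex.zero_le_real.mpr ht)))).add ?_
      exact (aux_psd_smul hK (mul_nonneg (Complex.zero_le_real.mpr hs) hσc.le)).add
        (aux_psd_smul hKK (mul_nonneg (Complex.zero_le_real.mpr hs) (Complex.zero_le_real.mpr ht)))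
    -- the difference of "N"s
    have hdiff : (t : ℂ) • B⁻¹ - (s : ℂ) • A⁻¹ = (((t - s) * σ^2 : ℝ) : ℂ) • (A * B)⁻¹ := by
      have e1 : B⁻¹ * ((t : ℂ) • A) * A⁻¹ = (t : ℂ) • B⁻¹ := by
        rw [mul_smul_comm, smul_mul_assoc, Matrix.mul_assoc, mul_nonsing_inv _ hAd, mul_one]
      have e2 : B⁻¹ * ((s : ℂ) • B) * A⁻¹ = (s : ℂ) • A⁻¹ := by
        rw [mul_smul_comm, smul_mul_assoc, nonsing_inv_mul _ hBd, one_mul]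
      have e3 : (t : ℂ) • A - (s : ℂ) • B = (((t - s) * σ^2 : ℝ) : ℂ) • (1 : Matrix (Fin n) (Fin n) ℂ) := by
        rw [hAdef, hBdef, hMtdef, hσcdef]
        push_cast
        simp only [smul_add, smul_smul]
        module
      calc (t : ℂ) • B⁻¹ - (s : ℂ) • A⁻¹
          = B⁻¹ * ((t : ℂ) • A - (s : ℂ) • B) * A⁻¹ := by
            rw [mul_sub, sub_mul, e1, e2]
        _ = (((t - s) * σ^2 : ℝ) : ℂ) • (B⁻¹ * A⁻¹) := by
            rw [e3, mul_smul_comm, smul_mul_assoc, mul_one]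
        _ = (((t - s) * σ^2 : ℝ) : ℂ) • (A * B)⁻¹ := by rw [Matrix.mul_inv_rev]
    have hcpos : (0 : ℂ) < (((t - s) * σ^2 : ℝ) : ℂ) :=
      Complex.zero_lt_real.mpr (mul_pos (by linarith) (by positivity))
    have hΔ : ((t : ℂ) • B⁻¹ - (s : ℂ) • A⁻¹).PosDef := by
      rw [hdiff]
      exact aux_pd_smul hAB.inv hcpos
    set Δ := (t : ℂ) • B⁻¹ - (s : ℂ) • A⁻¹ with hΔdef
    set X := 1 + Q * ((s : ℂ) • A⁻¹) * Q with hXdef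
    set D := Q * Δ * Q with hDdef
    have hXpd : X.PosDef := Matrix.PosDef.one.add_posSemidef (hQNQ s hs)
    have hDpsd : D.PosSemidef := by
      have := hΔ.posSemidef.mul_mul_conjTranspose_same Q
      rwa [hQH] at this
    have hsplit : 1 + Q * ((t : ℂ) • B⁻¹) * Q = X + D := by
      rw [hXdef, hDdef, hΔdef, mul_sub, sub_mul]
      abel
    obtain ⟨hle, hlt⟩ := aux_det_step hXpd hDpsd
    have hGs : G s = X.det.re := rfl
    have hGt : G t = (X + D).det.re := by rw [hGdef]; rw [← hsplit]
    refine ⟨by rw [hGs, hGt]; exact hle, ?_⟩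
    intro hS0
    have hQ0 : Q ≠ 0 := by
      intro h
      exact hS0 (by rw [← hSQ, h, mul_zero])
    have hv : ∃ v : Fin n → ℂ, Q *ᵥ v ≠ 0 := by
      by_contra h
      push_neg at h
      apply hQ0
      ext i j
      have := congrFun (h (Pi.single j 1)) i
      simpa [Matrix.mulVec_single] using this
    obtain ⟨v, hv⟩ := hv
    have hD0 : D ≠ 0 := by
      intro h
      have hq := hΔ.dotProduct_mulVec_pos hv
      have hcomp : star v ⬝ᵥ (D *ᵥ v) = star (Q *ᵥ v) ⬝ᵥ (Δ *ᵥ (Q *ᵥ v)) := by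
        rw [hDdef, ← Matrix.mulVec_mulVec, ← Matrix.mulVec_mulVec,
          Matrix.dotProduct_mulVec (star v) Q, star_mulVec, hQH]
      rw [h] at hcomp
      simp only [Matrix.zero_mulVec, dotProduct_zero] at hcomp
      rw [← hcomp] at hq
      exact hq.ne' rfl
    rw [hGs, hGt]
    exact hlt hD0
  -- assemble
  constructor
  · intro a ha b hb hab
    simp only [Set.mem_Ici] at ha hb
    simp only
    rw [hfun a, hfun b]
    rcases eq_or_lt_of_le hab with rfl | h
    · exact le_rfl
    · exact Real.log_le_log (by linarith [hG1 a ha]) (hkey a b ha h).1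
  · intro hS0 a ha b hb hab
    simp only [Set.mem_Ici] at ha hb
    simp only
    rw [hfun a, hfun b]
    exact Real.log_lt_log (by linarith [hG1 a ha]) ((hkey a b ha hab).2 hS0)
end

section
/- Alternating minimization convergence skeleton: Let G : V × U × W → ℝ be continuous with V compact, and suppose the iteration V^{n+1} ∈ argmin_V max-part of G(·, U^n, W^n), U^{n+1} = Ψ(V^{n+1}), W^{n+1} = Υ(V^{n+1}) with Ψ, Υ continuous, satisfies G(V^{n+1}, U^{n+1}, W^{n+1}) ≤ G(V^{n+1}, U^n, W^n) ≤ G(V^n, U^n, W^n). Then the sequence G(V^n, U^n, W^n) converges, and every cluster point V̄ of {V^n} satisfies G(V̄, Ψ(V̄), Υ(V̄)) ≤ G(V, Ψ(V̄), Υ(V̄)) for all V ∈ V. -/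
open Filter

set_option maxHeartbeats 1000000

theorem stmt_19
    {E : Type*} [NormedAddCommGroup E] [NormedSpace ℝ E] [FiniteDimensional ℝ E]
    {U W : Type*} [MetricSpace U] [MetricSpace W]
    (𝒱 : Set E) (h𝒱 : IsCompact 𝒱)
    (G : E → U → W → ℝ)
    (hG : Continuous fun p : E × U × W => G p.1 p.2.1 p.2.2)
    (Ψ : E → U) (Υ : E → W) (hΨ : Continuous Ψ) (hΥ : Continuous Υ)
    (v : ℕ → E) (u : ℕ → U) (w : ℕ → W)
    (hvmem : ∀ n, v n ∈ 𝒱)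
    (hu : ∀ n, u (n + 1) = Ψ (v (n + 1)))
    (hw : ∀ n, w (n + 1) = Υ (v (n + 1)))
    (hdec₁ : ∀ n, G (v (n + 1)) (u (n + 1)) (w (n + 1)) ≤ G (v (n + 1)) (u n) (w n))
    (hdec₂ : ∀ n, G (v (n + 1)) (u n) (w n) ≤ G (v n) (u n) (w n))
    (hargmin : ∀ n, ∀ x ∈ 𝒱, G (v (n + 1)) (u n) (w n) ≤ G x (u n) (w n))
    (hbdd : BddBelow (Set.range fun n => G (v n) (u n) (w n))) :
    (∃ L : ℝ, Tendsto (fun n => G (v n) (u n) (w n)) atTop (nhds L)) ∧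
      ∀ vbar : E, MapClusterPt vbar atTop v →
        ∀ x ∈ 𝒱, G vbar (Ψ vbar) (Υ vbar) ≤ G x (Ψ vbar) (Υ vbar) := by
  set g : ℕ → ℝ := fun n => G (v n) (u n) (w n) with hg
  have hanti : Antitone g := antitone_nat_of_succ_le fun n =>
    (hdec₁ n).trans (hdec₂ n)
  obtain ⟨L, hL⟩ : ∃ L, Tendsto g atTop (nhds L) :=
    ⟨_, tendsto_atTop_ciInf hanti hbdd⟩
  refine ⟨⟨L, hL⟩, ?_⟩
  intro vbar hcl x hx
  obtain ⟨ψ, hψmono, hψ⟩ := TopologicalSpace.FirstCountableTopology.tendsto_subseq hcl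
  have hψtop : Tendsto ψ atTop atTop := hψmono.tendsto_atTop
  -- u ∘ ψ tends to Ψ vbar, w ∘ ψ tends to Υ vbar (eventually u (ψ k) = Ψ (v (ψ k)))
  have heu : ∀ᶠ k in atTop, u (ψ k) = Ψ (v (ψ k)) := by
    filter_upwards [hψtop.eventually_ge_atTop 1] with k hk
    obtain ⟨m, hm⟩ := Nat.exists_eq_add_of_le hk
    rw [hm, add_comm]; exact hu m
  have hew : ∀ᶠ k in atTop, w (ψ k) = Υ (v (ψ k)) := by
    filter_upwards [hψtop.eventually_ge_atTop 1] with k hk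
    obtain ⟨m, hm⟩ := Nat.exists_eq_add_of_le hk
    rw [hm, add_comm]; exact hw m
  have hu' : Tendsto (fun k => u (ψ k)) atTop (nhds (Ψ vbar)) :=
    Tendsto.congr' (heu.mono fun k h => h.symm) ((hΨ.tendsto vbar).comp hψ)
  have hw' : Tendsto (fun k => w (ψ k)) atTop (nhds (Υ vbar)) :=
    Tendsto.congr' (hew.mono fun k h => h.symm) ((hΥ.tendsto vbar).comp hψ)
  -- g (ψ k) → G vbar (Ψ vbar) (Υ vbar)
  have hGlim : Tendsto (fun k => G (v (ψ k)) (u (ψ k)) (w (ψ k))) atTop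
      (nhds (G vbar (Ψ vbar) (Υ vbar))) :=
    (hG.tendsto (vbar, Ψ vbar, Υ vbar)).comp (hψ.prodMk_nhds (hu'.prodMk_nhds hw'))
  have hgL : Tendsto (fun k => g (ψ k)) atTop (nhds L) := hL.comp hψtop
  have hEq : G vbar (Ψ vbar) (Υ vbar) = L := tendsto_nhds_unique hGlim hgL
  -- RHS limit: G x (u (ψ k)) (w (ψ k)) → G x (Ψ vbar) (Υ vbar)
  have hRlim : Tendsto (fun k => G x (u (ψ k)) (w (ψ k))) atTop
      (nhds (G x (Ψ vbar) (Υ vbar))) :=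
    (hG.tendsto (x, Ψ vbar, Υ vbar)).comp
      (tendsto_const_nhds.prodMk_nhds (hu'.prodMk_nhds hw'))
  have hLlim : Tendsto (fun k => g (ψ k + 1)) atTop (nhds L) :=
    hL.comp ((tendsto_add_atTop_nat 1).comp hψtop)
  have hle : ∀ k, g (ψ k + 1) ≤ G x (u (ψ k)) (w (ψ k)) := fun k =>
    (hdec₁ (ψ k)).trans (hargmin (ψ k) x hx)
  have := le_of_tendsto_of_tendsto' hLlim hRlim hle
  linarith [hEq]
end
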